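/- Let (Ω, 𝔉, μ) be a measure space and let F : L²(μ) → ℝ be defined by F(v) = (1/2)·∫ (max(v(x), 0))² dμ(x). Then for every v ∈ L²(μ), F is Fréchet differentiable at v with derivative the continuous linear functional w ↦ ∫ max(v(x), 0)·w(x) dμ(x). -/

import Mathlib

/-!
Since `t ↦ ½ (t⁺)²` has the 1-Lipschitz derivative `t ↦ t⁺`, its first-order Taylor remainder
at `a` in direction `b` is at most `½ b²`. Integrating, the remainder of `F` at `v` in
direction `w` is at most `½ ‖w‖²`, which is `o(‖w‖)`; the linear part is `⟪v⁺, w⟫`.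
-/

open MeasureTheory Asymptotics Filter

lemma abs_half_max_sq_add_sub_sub_le (a b : ℝ) :
    |(1 / 2) * max (a + b) 0 ^ 2 - (1 / 2) * max a 0 ^ 2 - max a 0 * b| ≤ (1 / 2) * b ^ 2 := by
  rw [abs_le]
  rcases le_total (a + b) 0 with hab | hab <;> rcases le_total a 0 with ha | ha <;>
    simp only [max_eq_left, max_eq_right, hab, ha] <;> constructor <;> nlinarith

namespace MeasureTheory.L2

variable {Ω : Type*} [MeasurableSpace Ω] {μ : Measure Ω}

lemma inner_posPart_eq_integral (f g : Lp ℝ 2 μ) :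
    inner ℝ (Lp.posPart f) g = ∫ x, max (f x) 0 * g x ∂μ := by
  rw [inner_def]
  refine integral_congr_ae ((Lp.coeFn_posPart f).mono fun x hx => ?_)
  simp [hx, mul_comm]

lemma integral_sq_eq_norm_sq (g : Lp ℝ 2 μ) : ∫ x, g x ^ 2 ∂μ = ‖g‖ ^ 2 := by
  rw [← real_inner_self_eq_norm_sq, inner_def]
  simp [sq]

noncomputable def positivePartPenalty (μ : Measure Ω) (v : Lp ℝ 2 μ) : ℝ :=
  (1 / 2) * ∫ x, (max (v x) 0) ^ 2 ∂μ

lemma abs_positivePartPenalty_add_sub_sub_le (f g : Lp ℝ 2 μ) :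
    |positivePartPenalty μ (f + g) - positivePartPenalty μ f - inner ℝ (Lp.posPart f) g|
      ≤ (1 / 2) * ‖g‖ ^ 2 := by
  have hadd : positivePartPenalty μ (f + g) = (1 / 2) * ∫ x, max (f x + g x) 0 ^ 2 ∂μ := by
    refine congrArg _ (integral_congr_ae ((Lp.coeFn_add f g).mono fun x hx => ?_))
    simp only [hx, Pi.add_apply]
  have hint_add : Integrable (fun x => (1 / 2) * max (f x + g x) 0 ^ 2) μ :=
    ((Lp.memLp f).add (Lp.memLp g)).pos_part.integrable_sq.const_mul _
  have hint : Integrable (fun x => (1 / 2) * max (f x) 0 ^ 2) μ :=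
    (Lp.memLp f).pos_part.integrable_sq.const_mul _
  have hint_mul : Integrable (fun x => max (f x) 0 * g x) μ :=
    (Lp.memLp f).pos_part.integrable_mul (Lp.memLp g)
  calc _ = |∫ x, ((1 / 2) * max (f x + g x) 0 ^ 2 - (1 / 2) * max (f x) 0 ^ 2
              - max (f x) 0 * g x) ∂μ| := by
        rw [hadd, inner_posPart_eq_integral, integral_sub (hint_add.sub' hint) hint_mul,
          integral_sub hint_add hint, integral_const_mul, integral_const_mul,
          positivePartPenalty]
    _ ≤ ∫ x, |(1 / 2) * max (f x + g x) 0 ^ 2 - (1 / 2) * max (f x) 0 ^ 2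
              - max (f x) 0 * g x| ∂μ := abs_integral_le_integral_abs
    _ ≤ ∫ x, (1 / 2) * g x ^ 2 ∂μ :=
        integral_mono ((hint_add.sub' hint).sub' hint_mul).abs
          ((Lp.memLp g).integrable_sq.const_mul _)
          fun x => abs_half_max_sq_add_sub_sub_le (f x) (g x)
    _ = (1 / 2) * ‖g‖ ^ 2 := by rw [integral_const_mul, integral_sq_eq_norm_sq]

theorem hasFDerivAt_positivePartPenalty (v : Lp ℝ 2 μ) :
    HasFDerivAt (positivePartPenalty μ) (innerSL ℝ (Lp.posPart v)) v := by
  rw [hasFDerivAt_iff_isLittleO_nhds_zero]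
  refine (IsBigO.of_bound (1 / 2) (Eventually.of_forall fun g => ?_)).trans_isLittleO
    (isLittleO_norm_pow_id one_lt_two)
  simpa using abs_positivePartPenalty_add_sub_sub_le v g

end MeasureTheory.L2

theorem penalty_functional_frechet_diff
    {Ω : Type*} [MeasurableSpace Ω] (μ : Measure Ω)
    (F : Lp ℝ 2 μ → ℝ)
    (hF : ∀ v : Lp ℝ 2 μ, F v = (1 / 2) * ∫ x, (max (v x) 0) ^ 2 ∂μ) :
    ∀ v : Lp ℝ 2 μ, ∃ L : Lp ℝ 2 μ →L[ℝ] ℝ,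
      HasFDerivAt F L v ∧ ∀ w : Lp ℝ 2 μ, L w = ∫ x, max (v x) 0 * w x ∂μ := by
  obtain rfl : F = L2.positivePartPenalty μ := funext hF
  exact fun v => ⟨_, L2.hasFDerivAt_positivePartPenalty v, L2.inner_posPart_eq_integral v⟩
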